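/- For every c ≥ 1, fw(I_c D_c) = c + 1. -/

import Mathlib

/-- The increasing sequence `1 2 ... c`. -/
def Ic (c : ℕ) : List ℕ := List.range' 1 c

/-- The decreasing sequence `c (c-1) ... 1`. -/
def Dc (c : ℕ) : List ℕ := (Ic c).reverse

/-- `k` concatenated copies of the list `l`. -/
def rep (l : List ℕ) (k : ℕ) : List ℕ := (List.replicate k l).flatten

/-- `up(c,t)`: the sequence `1 2 ... c` repeated `t` times. -/
def upSeq (c t : ℕ) : List ℕ := rep (Ic c) t

/-- `alt(c,k)`: the concatenation of `k` permutations alternating `I_c, D_c, I_c, ...`. -/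
def altSeq (c k : ℕ) : List ℕ :=
  ((List.range k).map (fun i => if i % 2 = 0 then Ic c else Dc c)).flatten

/-- A sequence `s` contains `u` if some subsequence of `s` is obtained from `u`
by an injective renaming of its letters. -/
def Contains (s u : List ℕ) : Prop :=
  ∃ f : ℕ → ℕ, Function.Injective f ∧ (u.map f).Sublist s

/-- `F` is an `(r,s)`-formation: a concatenation of `s` permutations of a set of
`r` distinct letters. -/
def IsFormation (r s : ℕ) (F : List ℕ) : Prop :=
  ∃ (A : Finset ℕ) (ps : List (List ℕ)), A.card = r ∧ ps.length = s ∧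
    (∀ p ∈ ps, p.Nodup ∧ p.toFinset = A) ∧ F = ps.flatten

/-- `F` is a binary `(r,s)`-formation: an `(r,s)`-formation in which every
constituent permutation equals a fixed permutation `p` or its reverse. -/
def IsBinaryFormation (r s : ℕ) (F : List ℕ) : Prop :=
  ∃ (A : Finset ℕ) (p : List ℕ) (ps : List (List ℕ)), A.card = r ∧
    p.Nodup ∧ p.toFinset = A ∧ ps.length = s ∧
    (∀ q ∈ ps, q = p ∨ q = p.reverse) ∧ F = ps.flatten

/-- The formation width of `u`: the minimum `s` such that there exists `r` for which
every `(r,s)`-formation contains `u`. -/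
noncomputable def fw (u : List ℕ) : ℕ :=
  sInf {s | ∃ r, ∀ F, IsFormation r s F → Contains F u}

/-- The formation length of `u`: the minimum `r` such that every `(r, fw u)`-formation
contains `u`. -/
noncomputable def fl (u : List ℕ) : ℕ :=
  sInf {r | ∀ F, IsFormation r (fw u) F → Contains F u}

/-- For a permutation `π` of `{1,...,c}`, the sequence `I_π = π(1) π(2) ... π(c)`. -/
def Iperm {c : ℕ} (π : Equiv.Perm (Fin c)) : List ℕ :=
  List.ofFn (fun i => (π i).val + 1)

/-- `l(u)` for a sequence `u` on letters `1,...,c`: the smallest `k` such that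
`up(c,k)` contains `u`. -/
noncomputable def lval (c : ℕ) (u : List ℕ) : ℕ := sInf {k | Contains (upSeq c k) u}

/-- `r(u)` for a sequence `u` on letters `1,...,c`: the smallest `k` such that
`alt(c,k)` contains `u`. -/
noncomputable def rval (c : ℕ) (u : List ℕ) : ℕ := sInf {k | Contains (altSeq c k) u}

/-- The binary formation `I_c^{e_1} D_c^{e_2} I_c^{e_3} ...` determined by the list
of exponents `e` (blocks alternate starting with `I_c`). -/
def altBlocks (c : ℕ) (e : List ℕ) : List ℕ :=
  ((e.zipIdx.map Prod.swap).map (fun p => rep (if p.1 % 2 = 0 then Ic c else Dc c) p.2)).flatten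

/-!
Upper bound: in a `(c, c+1)`-formation, rename `D_c` onto the last permutation. Then `I_c`
becomes the same `c` letters in reverse order, and its `i`-th letter can be picked from the
`i`-th of the other `c` permutations.

Lower bound: use the formation `I_r^s`. The image `L ++ L.reverse` of `I_c D_c` has at least
`c` weak descents: each of the `c - 1` adjacent pairs of `L` is a weak descent of `L` or of
`L.reverse`, and the last letter of `L` is repeated in the middle. A subsequence of `s`
increasing blocks has at most `s - 1` weak descents, so `s ≥ c + 1`.
-/

open List Function

section WeakDescents

variable {α : Type*} [LinearOrder α]

def weakDescents : List α → ℕ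
  | a :: b :: t => (if b ≤ a then 1 else 0) + weakDescents (b :: t)
  | _ => 0

@[simp] lemma weakDescents_nil : weakDescents ([] : List α) = 0 := rfl

@[simp] lemma weakDescents_singleton (a : α) : weakDescents [a] = 0 := rfl

@[simp] lemma weakDescents_cons_cons (a b : α) (t : List α) :
    weakDescents (a :: b :: t) = (if b ≤ a then 1 else 0) + weakDescents (b :: t) := rfl

lemma weakDescents_eq_zero_of_pairwise_lt :
    ∀ {l : List α}, l.Pairwise (· < ·) → weakDescents l = 0
  | [], _ | [_], _ => rfl
  | a :: b :: t, h => by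
    have hab : a < b := rel_of_pairwise_cons h mem_cons_self
    rw [weakDescents_cons_cons, if_neg hab.not_ge, weakDescents_eq_zero_of_pairwise_lt h.of_cons]

lemma weakDescents_append_le :
    ∀ l m : List α, weakDescents (l ++ m) ≤ weakDescents l + weakDescents m + 1
  | [], m => by simp
  | [_], [] => by simp
  | [a], b :: m => by
    simp only [singleton_append, weakDescents_cons_cons, weakDescents_singleton]
    split <;> omega
  | a :: b :: l, m => by
    have := weakDescents_append_le (b :: l) m
    simp only [cons_append, weakDescents_cons_cons] at *
    omega

lemma weakDescents_append_cons_cons : ∀ (l : List α) (a b : α) (m : List α),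
    weakDescents (l ++ a :: b :: m) =
      weakDescents (l ++ [a]) + (if b ≤ a then 1 else 0) + weakDescents (b :: m)
  | [], a, b, m => by simp
  | [x], a, b, m => by
    simp only [singleton_append, weakDescents_cons_cons, weakDescents_singleton]
    omega
  | x :: y :: l, a, b, m => by
    have := weakDescents_append_cons_cons (y :: l) a b m
    simp only [cons_append, weakDescents_cons_cons] at *
    omega

lemma length_le_weakDescents_add_weakDescents_reverse :
    ∀ l : List α, l.length ≤ weakDescents l + weakDescents l.reverse + 1
  | [] | [_] => by simp
  | a :: b :: l => by
    have ih := length_le_weakDescents_add_weakDescents_reverse (b :: l)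
    have hrev : weakDescents (a :: b :: l).reverse =
        weakDescents (b :: l).reverse + (if a ≤ b then 1 else 0) := by
      simpa using weakDescents_append_cons_cons l.reverse b a []
    have hpair : 1 ≤ (if b ≤ a then 1 else 0) + (if a ≤ b then 1 else 0) := by
      rcases le_total a b with h | h <;> simp [h]
    rw [hrev, weakDescents_cons_cons, length_cons]
    omega

lemma length_le_weakDescents_append_reverse {l : List α} (hne : l ≠ []) :
    l.length ≤ weakDescents (l ++ l.reverse) := by
  obtain ⟨x, b, rfl⟩ : ∃ x b, l = x ++ [b] :=
    ⟨l.dropLast, l.getLast hne, (dropLast_append_getLast hne).symm⟩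
  have hlen := length_le_weakDescents_add_weakDescents_reverse (x ++ [b])
  have hrev : (x ++ [b]).reverse = b :: x.reverse := by simp
  rw [hrev] at hlen ⊢
  rw [append_assoc, singleton_append, weakDescents_append_cons_cons, if_pos le_rfl]
  omega

lemma weakDescents_lt_length_of_sublist_flatten :
    ∀ {l : List α} {ps : List (List α)}, l ≠ [] → (∀ p ∈ ps, p.Pairwise (· < ·)) →
      l <+ ps.flatten → weakDescents l < ps.length
  | _, [], hl, _, h => absurd (sublist_nil.mp h) hl
  | _, p :: ps, hl, hps, h => by
    obtain ⟨l₁, l₂, rfl, h₁, h₂⟩ := sublist_append_iff.mp (flatten_cons ▸ h)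
    have hl₁ : weakDescents l₁ = 0 :=
      weakDescents_eq_zero_of_pairwise_lt ((hps p mem_cons_self).sublist h₁)
    rcases eq_or_ne l₂ [] with rfl | hl₂
    · simp [hl₁]
    · have := weakDescents_lt_length_of_sublist_flatten hl₂
        (fun q hq => hps q (mem_cons_of_mem _ hq)) h₂
      have := weakDescents_append_le l₁ l₂
      simp only [length_cons]
      omega

end WeakDescents

lemma exists_injective_map_eq {α : Type*} [DecidableEq α] :
    ∀ {u v : List α}, u.Nodup → v.Nodup → u.length = v.length →
      ∃ f : α → α, Injective f ∧ u.map f = v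
  | [], [], _, _, _ => ⟨id, injective_id, rfl⟩
  | a :: u, b :: v, hu, hv, hlen => by
    obtain ⟨f, hf, hfu⟩ := exists_injective_map_eq hu.of_cons hv.of_cons (by simpa using hlen)
    refine ⟨Equiv.swap b (f a) ∘ f, (Equiv.injective _).comp hf, ?_⟩
    simp only [map_cons, comp_apply, Equiv.swap_apply_right, cons.injEq, true_and]
    rw [← hfu]
    refine map_congr_left fun x hx => Equiv.swap_apply_of_ne_of_ne ?_ ?_
    · rintro hxb
      exact (nodup_cons.mp hv).1 (hxb ▸ hfu ▸ mem_map_of_mem hx)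
    · exact hf.ne (ne_of_mem_of_not_mem hx (nodup_cons.mp hu).1)

lemma sublist_flatten_of_forall_mem {α : Type*} :
    ∀ {xs : List α} {ps : List (List α)}, xs.length ≤ ps.length →
      (∀ p ∈ ps, ∀ x ∈ xs, x ∈ p) → xs <+ ps.flatten
  | [], _, _, _ => nil_sublist _
  | _ :: _, [], hlen, _ => by simp at hlen
  | x :: xs, p :: ps, hlen, h => by
    rw [flatten_cons, ← singleton_append]
    exact (singleton_sublist.mpr (h p mem_cons_self x mem_cons_self)).append
      (sublist_flatten_of_forall_mem (by simpa using hlen)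
        fun q hq y hy => h q (mem_cons_of_mem _ hq) y (mem_cons_of_mem _ hy))

lemma contains_append_reverse_of_isFormation {u F : List ℕ} (hu : u.Nodup)
    (hF : IsFormation u.length (u.length + 1) F) : Contains F (u ++ u.reverse) := by
  obtain ⟨A, ps, hA, hlen, hps, rfl⟩ := hF
  have hne : ps ≠ [] := ne_nil_of_length_pos (by omega)
  obtain ⟨qs, q, rfl⟩ : ∃ qs q, ps = qs ++ [q] :=
    ⟨ps.dropLast, ps.getLast hne, (dropLast_append_getLast hne).symm⟩
  obtain ⟨hq, hqA⟩ := hps q (by simp)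
  have hqlen : q.length = u.length := by rw [← toFinset_card_of_nodup hq, hqA, hA]
  obtain ⟨f, hf, hfq⟩ :=
    exists_injective_map_eq (nodup_reverse.mpr hu) hq (by simpa using hqlen.symm)
  have hfu : u.map f = q.reverse := by rw [← reverse_reverse u, map_reverse, hfq]
  refine ⟨f, hf, ?_⟩
  rw [map_append, hfu, hfq, flatten_append, flatten_singleton]
  refine (sublist_flatten_of_forall_mem ?_ fun p hp x hx => ?_).append (Sublist.refl q)
  · simp only [length_append, length_singleton] at hlen
    rw [length_reverse, hqlen]
    omega
  · rw [← mem_toFinset, (hps p (by simp [hp])).2, ← hqA, mem_toFinset]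
    exact mem_reverse.mp hx

lemma upSeq_isFormation (r s : ℕ) : IsFormation r s (upSeq r s) :=
  ⟨(Ic r).toFinset, replicate s (Ic r), by simp [toFinset_card_of_nodup, Ic, nodup_range'],
    length_replicate, fun p hp => by rw [eq_of_mem_replicate hp]; exact ⟨nodup_range', rfl⟩, rfl⟩

lemma length_lt_of_contains_upSeq {u : List ℕ} (hne : u ≠ []) {r s : ℕ}
    (h : Contains (upSeq r s) (u ++ u.reverse)) : u.length < s := by
  obtain ⟨f, -, hsub⟩ := h
  rw [map_append, map_reverse] at hsub
  have hblocks := weakDescents_lt_length_of_sublist_flatten (by simpa using hne)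
    (fun p hp => eq_of_mem_replicate hp ▸ pairwise_lt_range') hsub
  have := length_le_weakDescents_append_reverse (l := u.map f) (by simpa using hne)
  simp only [length_map, length_replicate] at *
  omega

theorem stmt12 (c : ℕ) (hc : 1 ≤ c) : fw (Ic c ++ Dc c) = c + 1 := by
  have hnodup : (Ic c).Nodup := nodup_range'
  have hlen : (Ic c).length = c := length_range'
  have hmem : c + 1 ∈ {s | ∃ r, ∀ F, IsFormation r s F → Contains F (Ic c ++ Dc c)} :=
    ⟨c, fun F hF => contains_append_reverse_of_isFormation hnodup (by rwa [hlen])⟩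
  refine le_antisymm (Nat.sInf_le hmem) (le_csInf ⟨_, hmem⟩ ?_)
  rintro s ⟨r, hs⟩
  have := length_lt_of_contains_upSeq (ne_nil_of_length_pos (by omega))
    (hs _ (upSeq_isFormation r s))
  omega
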